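/- arXiv:1608.01128 — 5 statements merged into one kernel-verified Lean document; each statement's English description precedes it below -/
import Mathlib

section
/- Let w, ŵ ∈ ℝ^N with ‖w‖₀ = s, and let q = min{|w_i| : w_i ≠ 0}. If ‖w - ŵ‖₂² < q²/2, then the support of H_s(ŵ) equals the support of w, where H_s is the hard threshold operator keeping the s largest (in absolute value) coefficients (keeping all tying coefficients in case of ties). -/
open Finset

attribute [local instance] Classical.propDecidable

/-- Hard threshold operator: keeps coordinate `i` iff fewer than `s` coordinates
have strictly larger absolute value (so all coordinates tying at the threshold are kept). -/
noncomputable def hardThr {N : Nat} (s : Nat) (x : Fin N → ℝ) : Fin N → ℝ :=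
  fun i => if (Finset.univ.filter (fun j => |x j| > |x i|)).card < s then x i else 0

/-- Support of a vector as a finite set of indices. -/
noncomputable def spt {N : Nat} (x : Fin N → ℝ) : Finset (Fin N) :=
  Finset.univ.filter (fun i => x i ≠ 0)

/-! If `|wh j| ≥ |wh i|` for some `i` in the support of `w` and some `j` outside it, then
`q ≤ |w i| ≤ |w i - wh i| + |wh j|`, so `q² ≤ 2 ((w i - wh i)² + (w j - wh j)²) ≤ 2 ‖w - wh‖² < q²`.
Hence every coordinate of `wh` on the support of `w` is nonzero and strictly larger in absolute
value than every coordinate off it, and since the support has exactly `s` elements the hard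
threshold keeps precisely these coordinates. -/

section Inequality

variable {K : Type*} [Field K] [LinearOrder K] [IsStrictOrderedRing K]

theorem abs_lt_abs_of_sub_sq_add_sq_lt {q a x y : K} (hq : 0 ≤ q) (ha : q ≤ |a|)
    (h : (a - x) ^ 2 + y ^ 2 < q ^ 2 / 2) : |y| < |x| := by
  by_contra! hxy
  have hsub : |a| - |x| ≤ |a - x| := abs_sub_abs_le_abs_sub a x
  have hle : q ≤ |a - x| + |y| := by linarith
  nlinarith [sq_abs (a - x), sq_abs y, sq_nonneg (|a - x| - |y|),
    mul_le_mul hle hle hq (by positivity : (0 : K) ≤ |a - x| + |y|)]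

end Inequality

section HardThreshold

variable {N s : ℕ} {x : Fin N → ℝ} {i : Fin N}

theorem hardThr_apply_of_card_lt (h : (univ.filter fun j => |x i| < |x j|).card < s) :
    hardThr s x i = x i :=
  if_pos h

theorem hardThr_apply_of_le_card (h : s ≤ (univ.filter fun j => |x i| < |x j|).card) :
    hardThr s x i = 0 :=
  if_neg h.not_gt

theorem mem_spt {w : Fin N → ℝ} : i ∈ spt w ↔ w i ≠ 0 := by
  simp [spt]

theorem spt_hardThr_eq {S : Finset (Fin N)} (hS : S.card = s)
    (hsep : ∀ i ∈ S, ∀ j ∉ S, |x j| < |x i|) (hne : ∀ i ∈ S, x i ≠ 0) :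
    spt (hardThr s x) = S := by
  ext i
  rw [mem_spt]
  by_cases hi : i ∈ S
  · have hsub : (univ.filter fun j => |x i| < |x j|) ⊆ S.erase i := by
      intro j hj
      rw [mem_filter] at hj
      refine mem_erase.2 ⟨fun hji => ?_, ?_⟩
      · exact (lt_irrefl _) (hji ▸ hj.2)
      · by_contra hjS
        exact (hsep i hi j hjS).not_gt hj.2
    have hcard : (univ.filter fun j => |x i| < |x j|).card < s := by
      have := card_le_card hsub
      rw [card_erase_of_mem hi, hS] at this
      have : 0 < s := hS ▸ card_pos.2 ⟨i, hi⟩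
      omega
    simp only [hardThr_apply_of_card_lt hcard, hi, iff_true]
    exact hne i hi
  · have hsub : S ⊆ univ.filter fun j => |x i| < |x j| := fun j hj =>
      mem_filter.2 ⟨mem_univ j, hsep j hj i hi⟩
    simp [hardThr_apply_of_le_card (hS ▸ card_le_card hsub), hi]

end HardThreshold

theorem stmt0 {N s : ℕ} (w wh : Fin N → ℝ) (q : ℝ)
    (hs : (spt w).card = s)
    (hq1 : ∀ i, w i ≠ 0 → q ≤ |w i|) (hq2 : ∃ i, w i ≠ 0 ∧ |w i| = q)
    (herr : ∑ i, (w i - wh i) ^ 2 < q ^ 2 / 2) :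
    spt (hardThr s wh) = spt w := by
  have hq : 0 ≤ q := by
    obtain ⟨i, -, rfl⟩ := hq2
    exact abs_nonneg _
  refine spt_hardThr_eq hs (fun i hi j hj => ?_) (fun i hi => ?_)
  · rw [mem_spt] at hi
    rw [mem_spt, not_not] at hj
    have hij : i ≠ j := fun h => hi (h ▸ hj)
    refine abs_lt_abs_of_sub_sq_add_sq_lt hq (hq1 i hi) ?_
    have := add_le_sum (fun k _ => sq_nonneg (w k - wh k)) (mem_univ i) (mem_univ j) hij
    simp only [hj, zero_sub, neg_sq] at this
    linarith
  · rw [mem_spt] at hi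
    have hpos : |(0 : ℝ)| < |wh i| := by
      refine abs_lt_abs_of_sub_sq_add_sq_lt hq (hq1 i hi) ?_
      have := single_le_sum (fun k _ => sq_nonneg (w k - wh k)) (mem_univ i)
      linarith [zero_pow (M₀ := ℝ) two_ne_zero]
    simpa using hpos
end

section
/- Let w, ŵ ∈ ℝ^N with ‖w‖₀ = s, q = min{|w_i| : w_i ≠ 0}, and d = s + τ with τ > 0 an integer and d < N. If ‖w - ŵ‖₂² < q²(1 - 1/(τ+2)) and ‖ŵ‖₀ ≥ d, then support(H_d(ŵ)) ⊇ support(w). -/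
open Finset

attribute [local instance] Classical.propDecidable

set_option maxHeartbeats 1000000 in
theorem stmt1 {N s τ d : ℕ} (w wh : Fin N → ℝ) (q : ℝ)
    (hτ : 0 < τ) (hd : d = s + τ) (hdN : d < N)
    (hs : (spt w).card = s)
    (hq1 : ∀ i, w i ≠ 0 → q ≤ |w i|) (hq2 : ∃ i, w i ≠ 0 ∧ |w i| = q)
    (herr : ∑ i, (w i - wh i) ^ 2 < q ^ 2 * (1 - 1 / ((τ : ℝ) + 2)))
    (hwh : d ≤ (spt wh).card) :
    spt w ⊆ spt (hardThr d wh) := by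
  set t : ℝ := (τ : ℝ) with ht
  obtain ⟨i0, hi0, hqi0⟩ := hq2
  have hqpos : 0 < q := hqi0 ▸ abs_pos.mpr hi0
  have htpos : (0:ℝ) < t + 2 := by positivity
  have herr' : (∑ i, (w i - wh i) ^ 2) * (t + 2) < q ^ 2 * (t + 1) := by
    have hfrac : q ^ 2 * (1 - 1 / (t + 2)) = q ^ 2 * (t + 1) / (t + 2) := by
      field_simp; ring
    rw [hfrac, lt_div_iff₀ htpos] at herr
    exact herr
  intro i hi
  simp only [spt, mem_filter, mem_univ, true_and] at hi ⊢
  have hqi : q ≤ |w i| := hq1 i hi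
  have hbq : q ^ 2 ≤ (w i) ^ 2 := by
    have := sq_abs (w i); nlinarith
  by_contra hcon
  unfold hardThr at hcon
  by_cases hwhi : wh i = 0
  · have h1 : (w i - wh i) ^ 2 ≤ ∑ j, (w j - wh j) ^ 2 :=
      Finset.single_le_sum (f := fun j => (w j - wh j) ^ 2) (fun j _ => sq_nonneg _) (mem_univ i)
    rw [hwhi, sub_zero] at h1
    nlinarith
  · have hcard : d ≤ (Finset.univ.filter (fun j => |wh j| > |wh i|)).card := by
      by_contra h
      push_neg at h
      rw [if_pos h] at hcon
      exact hwhi hcon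
    set T := Finset.univ.filter (fun j => |wh j| > |wh i|) with hT
    set S := spt w with hS
    have hiS : i ∈ S := by simp [hS, spt, hi]
    have hiT : i ∉ T := by simp [hT]
    have hsub : T ∩ S ⊆ S.erase i := fun j hj => by
      rcases mem_inter.mp hj with ⟨hjT, hjS⟩
      exact mem_erase.mpr ⟨fun h => hiT (h ▸ hjT), hjS⟩
    have hTS : (T ∩ S).card ≤ s - 1 := by
      have := Finset.card_le_card hsub
      rwa [Finset.card_erase_of_mem hiS, hs] at this
    have hspos : 1 ≤ s := by
      have := Finset.card_pos.mpr ⟨i, hiS⟩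
      omega
    set U := T \ S with hU
    have hUcard : τ + 1 ≤ U.card := by
      have hsplit : U.card + (T ∩ S).card = T.card := by
        rw [hU]; exact Finset.card_sdiff_add_card_inter T S
      omega
    have hiU : i ∉ U := fun h => hiT (mem_sdiff.mp h).1
    -- each j ∈ U contributes at least (wh i)^2
    have hterm : ∀ j ∈ U, (wh i) ^ 2 ≤ (w j - wh j) ^ 2 := by
      intro j hj
      rcases mem_sdiff.mp hj with ⟨hjT, hjS⟩
      have hwj : w j = 0 := by
        by_contra h
        exact hjS (by simp [hS, spt, h])
      have habs : |wh i| < |wh j| := by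
        simpa [hT] using hjT
      have := sq_abs (wh i)
      have := sq_abs (wh j)
      have := abs_nonneg (wh i)
      rw [hwj, zero_sub]
      nlinarith
    have hsumU : (U.card : ℝ) * (wh i) ^ 2 ≤ ∑ j ∈ U, (w j - wh j) ^ 2 := by
      calc (U.card : ℝ) * (wh i) ^ 2 = ∑ _j ∈ U, (wh i) ^ 2 := by
            rw [Finset.sum_const, nsmul_eq_mul]
        _ ≤ ∑ j ∈ U, (w j - wh j) ^ 2 := Finset.sum_le_sum hterm
    have hsumIns : ∑ j ∈ insert i U, (w j - wh j) ^ 2 ≤ ∑ j, (w j - wh j) ^ 2 :=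
      Finset.sum_le_sum_of_subset_of_nonneg (Finset.subset_univ _)
        (fun j _ _ => sq_nonneg _)
    rw [Finset.sum_insert hiU] at hsumIns
    have hUc : (t + 1) ≤ (U.card : ℝ) := by
      have : ((τ + 1 : ℕ) : ℝ) ≤ (U.card : ℝ) := Nat.cast_le.mpr hUcard
      push_cast at this
      linarith
    have hkey : (w i - wh i) ^ 2 + (t + 1) * (wh i) ^ 2 ≤ ∑ j, (w j - wh j) ^ 2 := by
      nlinarith [sq_nonneg (wh i)]
    have ht0 : (0:ℝ) ≤ t + 1 := by positivity
    have e1 : (t + 2) * ((w i - wh i) ^ 2 + (t + 1) * (wh i) ^ 2)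
        ≤ (t + 2) * ∑ j, (w j - wh j) ^ 2 :=
      mul_le_mul_of_nonneg_left hkey htpos.le
    have e2 : (t + 1) * (w i) ^ 2
        ≤ (t + 2) * ((w i - wh i) ^ 2 + (t + 1) * (wh i) ^ 2) := by
      nlinarith [sq_nonneg (w i - (t + 2) * wh i)]
    have e3 : (t + 1) * q ^ 2 ≤ (t + 1) * (w i) ^ 2 :=
      mul_le_mul_of_nonneg_left hbq ht0
    nlinarith
end

section
/- Let w, ŵ ∈ ℝ^N, let q = min{|w_i| : w_i ≠ 0}, and suppose there exists an index ℓ with w_ℓ ≠ 0 and indices k_1, ..., k_{τ+1} (distinct, τ ≥ 0 an integer) with w_{k_i} = 0 and |ŵ_{k_i}| > |ŵ_ℓ| for all i, and ℓ distinct from all k_i. Then ‖w - ŵ‖₂² > q²(1 - 1/(τ+2)). -/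
open Finset

attribute [local instance] Classical.propDecidable

theorem stmt4 {N τ : ℕ} (w wh : Fin N → ℝ) (q : ℝ)
    (hq1 : ∀ i, w i ≠ 0 → q ≤ |w i|) (hq2 : ∃ i, w i ≠ 0 ∧ |w i| = q)
    (ℓ : Fin N) (hℓ : w ℓ ≠ 0)
    (k : Fin (τ + 1) → Fin N) (hkinj : Function.Injective k)
    (hkℓ : ∀ i, k i ≠ ℓ)
    (hkw : ∀ i, w (k i) = 0)
    (hkgt : ∀ i, |wh ℓ| < |wh (k i)|) :
    q ^ 2 * (1 - 1 / ((τ : ℝ) + 2)) < ∑ i, (w i - wh i) ^ 2 := by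
  have hq0 : 0 < q := by
    obtain ⟨i, hi, hiq⟩ := hq2
    rw [← hiq]; exact abs_pos.mpr hi
  set a := |wh ℓ| with ha
  have ha0 : 0 ≤ a := abs_nonneg _
  have hm : q ≤ |w ℓ| := hq1 ℓ hℓ
  have hnotmem : ℓ ∉ Finset.image k Finset.univ := by
    simp only [Finset.mem_image]
    rintro ⟨i, -, hi⟩; exact hkℓ i hi
  have hsum : ∑ i ∈ insert ℓ (Finset.image k Finset.univ), (w i - wh i) ^ 2
      ≤ ∑ i, (w i - wh i) ^ 2 :=
    Finset.sum_le_sum_of_subset_of_nonneg (Finset.subset_univ _) (fun i _ _ => sq_nonneg _)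
  rw [Finset.sum_insert hnotmem,
    Finset.sum_image (fun i _ j _ h => hkinj h)] at hsum
  have h1 : ∀ i, a ^ 2 < (w (k i) - wh (k i)) ^ 2 := by
    intro i
    rw [hkw i, zero_sub, neg_sq, ← sq_abs (wh (k i))]
    exact pow_lt_pow_left₀ (hkgt i) ha0 two_ne_zero
  have h2 : ((τ : ℝ) + 1) * a ^ 2 < ∑ i : Fin (τ + 1), (w (k i) - wh (k i)) ^ 2 := by
    have := Finset.sum_lt_sum_of_nonempty (Finset.univ_nonempty (α := Fin (τ + 1)))
      (fun i _ => h1 i)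
    have hc : ∑ _i : Fin (τ + 1), a ^ 2 = ((τ : ℝ) + 1) * a ^ 2 := by
      rw [Finset.sum_const, Finset.card_univ, Fintype.card_fin, nsmul_eq_mul]
      push_cast; ring
    linarith [this, hc.ge]
  have hT : (0 : ℝ) ≤ (τ : ℝ) := Nat.cast_nonneg τ
  have hT2 : (0 : ℝ) < (τ : ℝ) + 2 := by linarith
  have heq : q ^ 2 * (1 - 1 / ((τ : ℝ) + 2)) = q ^ 2 * ((τ : ℝ) + 1) / ((τ : ℝ) + 2) := by
    field_simp; ring
  rcases le_or_gt a q with hca | hca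
  · have h4 := abs_sub_abs_le_abs_sub (w ℓ) (wh ℓ)
    have hb : (q - a) ^ 2 ≤ (w ℓ - wh ℓ) ^ 2 := by
      calc (q - a) ^ 2 ≤ |w ℓ - wh ℓ| ^ 2 :=
            pow_le_pow_left₀ (by linarith) (by linarith) 2
        _ = _ := sq_abs _
    have key : q ^ 2 * (1 - 1 / ((τ : ℝ) + 2)) ≤ (q - a) ^ 2 + ((τ : ℝ) + 1) * a ^ 2 := by
      rw [heq, div_le_iff₀ hT2]
      nlinarith [sq_nonneg (q - ((τ : ℝ) + 2) * a)]
    nlinarith [hsum, h2, hb, key]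
  · have key : q ^ 2 * (1 - 1 / ((τ : ℝ) + 2)) < ((τ : ℝ) + 1) * a ^ 2 := by
      rw [heq, div_lt_iff₀ hT2]
      have haq : q ^ 2 < a ^ 2 := by nlinarith
      have h5 : (0 : ℝ) < (τ : ℝ) + 1 := by linarith
      nlinarith [mul_lt_mul_of_pos_left haq h5,
        mul_nonneg (mul_nonneg hT h5.le) (sq_nonneg a)]
    nlinarith [hsum, h2, key, sq_nonneg (w ℓ - wh ℓ)]
end

section
/- Let w, ŵ ∈ ℝ^N, q = min{|w_i| : w_i ≠ 0}. If there exist distinct indices k, ℓ with w_k = 0, w_ℓ ≠ 0, and |ŵ_k| ≥ |ŵ_ℓ|, then ‖w - ŵ‖₂² ≥ q²/2. -/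
open Finset

attribute [local instance] Classical.propDecidable

theorem stmt5 {N : ℕ} (w wh : Fin N → ℝ) (q : ℝ)
    (hq1 : ∀ i, w i ≠ 0 → q ≤ |w i|) (hq2 : ∃ i, w i ≠ 0 ∧ |w i| = q)
    (k ℓ : Fin N) (hkℓ : k ≠ ℓ)
    (hk : w k = 0) (hℓ : w ℓ ≠ 0) (hge : |wh ℓ| ≤ |wh k|) :
    q ^ 2 / 2 ≤ ∑ i, (w i - wh i) ^ 2 := by
  have hq : q ≤ |w ℓ| := hq1 ℓ hℓ
  have hsub : ({k, ℓ} : Finset (Fin N)) ⊆ univ := subset_univ _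
  have hsum : ∑ i ∈ ({k, ℓ} : Finset (Fin N)), (w i - wh i) ^ 2 ≤
      ∑ i, (w i - wh i) ^ 2 :=
    Finset.sum_le_sum_of_subset_of_nonneg hsub (fun i _ _ => sq_nonneg _)
  rw [Finset.sum_pair hkℓ] at hsum
  refine le_trans ?_ hsum
  have hq0 : 0 ≤ q := by obtain ⟨i, _, hi⟩ := hq2; rw [← hi]; exact abs_nonneg _
  have h1 : (w ℓ - wh ℓ) ^ 2 ≥ (|w ℓ| - |wh ℓ|) ^ 2 := by
    have t1 := abs_sub_abs_le_abs_sub (w ℓ) (wh ℓ)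
    have t2 := abs_sub_abs_le_abs_sub (wh ℓ) (w ℓ)
    rw [abs_sub_comm] at t2
    nlinarith [abs_nonneg (w ℓ - wh ℓ), sq_abs (w ℓ - wh ℓ)]
  have h2 : (w k - wh k) ^ 2 = |wh k| ^ 2 := by rw [hk]; rw [sq_abs]; ring
  nlinarith [sq_nonneg (|w ℓ| - 2 * |wh ℓ|), abs_nonneg (wh ℓ), abs_nonneg (wh k)]
end

section
/- Let w, ŵ ∈ ℝ^N with ‖w‖₀ = s and q = min{|w_i| : w_i ≠ 0}, and suppose ‖H_s(ŵ)‖₀ > s (i.e., ties occur at the threshold) with some tying coordinate ℓ lying in support(w) and some coordinate k in support(H_s(ŵ)) with w_k = 0 and |ŵ_k| ≥ |ŵ_ℓ|. Then ‖w - ŵ‖₂² ≥ q²/2. -/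
open Finset

attribute [local instance] Classical.propDecidable

theorem stmt17 {N s : ℕ} (w wh : Fin N → ℝ) (q : ℝ)
    (hs : (spt w).card = s)
    (hq1 : ∀ i, w i ≠ 0 → q ≤ |w i|) (hq2 : ∃ i, w i ≠ 0 ∧ |w i| = q)
    (hties : s < (spt (hardThr s wh)).card)
    (ℓ k : Fin N)
    (hℓmem : ℓ ∈ spt (hardThr s wh)) (hℓw : w ℓ ≠ 0)
    (hkmem : k ∈ spt (hardThr s wh)) (hkw : w k = 0)
    (hkℓ : |wh ℓ| ≤ |wh k|) :
    q ^ 2 / 2 ≤ ∑ i, (w i - wh i) ^ 2 := by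
  have hkl : k ≠ ℓ := fun h => hℓw (h ▸ hkw)
  have hq0 : 0 ≤ q := by
    obtain ⟨i, hi, hiq⟩ := hq2; rw [← hiq]; positivity
  have hql : q ≤ |w ℓ| := hq1 ℓ hℓw
  have hsum : (w k - wh k) ^ 2 + (w ℓ - wh ℓ) ^ 2 ≤ ∑ i, (w i - wh i) ^ 2 := by
    have h := Finset.sum_le_sum_of_subset_of_nonneg
      (Finset.subset_univ ({k, ℓ} : Finset (Fin N)))
      (fun i _ _ => sq_nonneg (w i - wh i))
    rwa [Finset.sum_pair hkl] at h
  have h1 : q ^ 2 ≤ |w ℓ| ^ 2 := pow_le_pow_left₀ hq0 hql 2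
  have h2 : |wh ℓ| ^ 2 ≤ |wh k| ^ 2 := pow_le_pow_left₀ (abs_nonneg _) hkℓ 2
  rw [hkw] at hsum
  nlinarith [hsum, h1, h2, sq_nonneg (2 * wh ℓ - w ℓ), sq_abs (w ℓ), sq_abs (wh ℓ),
    sq_abs (wh k), hkw]
end
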